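/- Let F be a random variable with E[exp(λF)] < ∞ for all λ ≥ 0, and suppose that for every λ ≥ 0 the entropy bound Ent(e^{λF}) ≤ (λ²σ²/2)·E[e^{λF}] holds, where Ent(g) = E[g ln g] − E[g] ln E[g]. Then for all r ≥ 0, P(F − E[F] ≥ r) ≤ exp(−r²/(2σ²)). -/

import Mathlib

/-!
Write `K(t) = log E[e^{tF}]` for the cumulant generating function. Differentiating,
`(K(t)/t)' = Ent(e^{tF}) / (t² E[e^{tF}])`, so the entropy bound says exactly that
`K(t)/t` grows with slope at most `σ²/2`. Since `K(t)/t → E[F]` as `t → 0⁺`, this gives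
`K(t) ≤ t E[F] + σ²t²/2` for `t ≥ 0`, and Chernoff's bound at `t = r/σ²` yields the tail.
-/

open MeasureTheory Real Filter Set Topology

namespace ProbabilityTheory

variable {Ω : Type*} {m : MeasurableSpace Ω} {μ : Measure Ω} {X : Ω → ℝ} {t : ℝ}

noncomputable def entropy (μ : Measure Ω) (g : Ω → ℝ) : ℝ :=
  μ[fun ω ↦ g ω * log (g ω)] - μ[g] * log μ[g]

lemma entropy_exp_mul :
    entropy μ (fun ω ↦ exp (t * X ω)) =
      t * μ[fun ω ↦ X ω * exp (t * X ω)] - mgf X μ t * cgf X μ t := by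
  simp only [entropy, log_exp, cgf, mgf, ← integral_const_mul]
  congr 2 with ω
  ring

lemma hasDerivAt_cgf_div [NeZero μ] (ht : t ∈ interior (integrableExpSet X μ)) (ht0 : t ≠ 0) :
    HasDerivAt (fun s ↦ cgf X μ s / s)
      (entropy μ (fun ω ↦ exp (t * X ω)) / (t ^ 2 * mgf X μ t)) t := by
  have hpos : 0 < mgf X μ t :=
    mgf_pos' (NeZero.ne μ) (interior_subset ht : t ∈ integrableExpSet X μ)
  refine (((hasDerivAt_mgf ht).log hpos.ne').div (hasDerivAt_id t) ht0).congr_deriv ?_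
  rw [entropy_exp_mul, cgf, id]
  generalize μ[fun ω ↦ X ω * exp (t * X ω)] = d
  field_simp

lemma cgf_div_sub_cgf_div_le [NeZero μ] {σ a : ℝ}
    (hexp : ∀ t, 0 < t → Integrable (fun ω ↦ exp (t * X ω)) μ)
    (hent : ∀ t, 0 < t → entropy μ (fun ω ↦ exp (t * X ω)) ≤ t ^ 2 * σ ^ 2 / 2 * mgf X μ t)
    (ha : 0 < a) (hat : a ≤ t) :
    cgf X μ t / t - cgf X μ a / a ≤ σ ^ 2 / 2 * (t - a) := by
  have hD : Ioi 0 ⊆ interior (integrableExpSet X μ) :=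
    interior_Ioi (a := (0 : ℝ)) ▸ interior_mono fun s hs ↦ hexp s hs
  have hderiv : ∀ s ∈ Ioi (0 : ℝ), HasDerivAt (fun s ↦ cgf X μ s / s)
      (entropy μ (fun ω ↦ exp (s * X ω)) / (s ^ 2 * mgf X μ s)) s :=
    fun s hs ↦ hasDerivAt_cgf_div (hD hs) (ne_of_gt hs)
  refine (convex_Ioi 0).image_sub_le_mul_sub_of_deriv_le
    (fun s hs ↦ (hderiv s hs).continuousAt.continuousWithinAt)
    (fun s hs ↦ (hderiv s (interior_subset hs)).differentiableAt.differentiableWithinAt)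
    (fun s hs ↦ ?_) a ha t (ha.trans_le hat) hat
  rw [interior_Ioi, mem_Ioi] at hs
  have hpos : 0 < mgf X μ s := mgf_pos' (NeZero.ne μ) (hexp s hs)
  rw [(hderiv s hs).deriv, div_le_iff₀ (by positivity)]
  linarith [hent s hs]

lemma abs_exp_mul_sub_one_div_le {x : ℝ} (ht0 : 0 < t) (ht1 : t ≤ 1) :
    |(exp (t * x) - 1) / t| ≤ |x| + exp x := by
  have hlow : x ≤ (exp (t * x) - 1) / t := by
    rw [le_div_iff₀ ht0]
    linarith [add_one_le_exp (t * x)]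
  have hup : (exp (t * x) - 1) / t ≤ exp x - 1 := by
    rw [div_le_iff₀ ht0]
    have hconv := convexOn_exp.2 (mem_univ x) (mem_univ 0) ht0.le (sub_nonneg.2 ht1) (by ring)
    simp only [smul_eq_mul, mul_zero, add_zero, exp_zero, mul_one] at hconv
    nlinarith
  rw [abs_le]
  constructor <;> linarith [neg_abs_le x, le_abs_self x, exp_pos x]

lemma tendsto_mgf_sub_one_div [IsProbabilityMeasure μ] (hX : Integrable X μ)
    (hexp : Integrable (fun ω ↦ exp (X ω)) μ) :
    Tendsto (fun t ↦ (mgf X μ t - 1) / t) (𝓝[>] 0) (𝓝 μ[X]) := by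
  have hint : ∀ t ∈ Ioc (0 : ℝ) 1, Integrable (fun ω ↦ exp (t * X ω)) μ := fun t ht ↦
    integrable_exp_mul_of_le_of_le (a := 0) (b := 1) (by simp) (by simpa using hexp)
      ht.1.le ht.2
  have hmem : Ioc (0 : ℝ) 1 ∈ 𝓝[>] 0 := Ioc_mem_nhdsGT one_pos
  have heq : (fun t ↦ μ[fun ω ↦ (exp (t * X ω) - 1) / t]) =ᶠ[𝓝[>] 0]
      fun t ↦ (mgf X μ t - 1) / t := by
    filter_upwards [hmem] with t ht
    rw [integral_div, integral_sub (hint t ht) (integrable_const 1)]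
    simp [mgf]
  refine Tendsto.congr' heq (tendsto_integral_filter_of_dominated_convergence
    (fun ω ↦ |X ω| + exp (X ω)) ?_ ?_ (hX.abs.add hexp) ?_)
  · filter_upwards [hmem] with t ht
    exact ((hint t ht).sub (integrable_const 1)).div_const t |>.aestronglyMeasurable
  · filter_upwards [hmem] with t ht
    exact Eventually.of_forall fun ω ↦ abs_exp_mul_sub_one_div_le ht.1 ht.2
  · refine Eventually.of_forall fun ω ↦ ?_
    have hd : HasDerivAt (fun t ↦ exp (t * X ω)) (X ω) 0 := by
      simpa using (hasDerivAt_mul_const (X ω) (x := 0)).exp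
    simpa [div_eq_inv_mul] using hd.tendsto_slope_zero_right

theorem cgf_le_of_entropy_le [IsProbabilityMeasure μ] {σ : ℝ} (hX : Integrable X μ)
    (hexp : ∀ t, 0 ≤ t → Integrable (fun ω ↦ exp (t * X ω)) μ)
    (hent : ∀ t, 0 < t → entropy μ (fun ω ↦ exp (t * X ω)) ≤ t ^ 2 * σ ^ 2 / 2 * mgf X μ t)
    (ht : 0 ≤ t) :
    cgf X μ t ≤ t * μ[X] + σ ^ 2 * t ^ 2 / 2 := by
  rcases ht.eq_or_lt with rfl | ht
  · simp
  suffices cgf X μ t / t ≤ μ[X] + σ ^ 2 / 2 * t by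
    rw [div_le_iff₀ ht] at this
    linarith
  have hlim : Tendsto (fun a ↦ (mgf X μ a - 1) / a + σ ^ 2 / 2 * (t - a)) (𝓝[>] 0)
      (𝓝 (μ[X] + σ ^ 2 / 2 * (t - 0))) :=
    (tendsto_mgf_sub_one_div hX (by simpa using hexp 1 zero_le_one)).add
      ((tendsto_const_nhds.sub tendsto_id).const_mul _ |>.mono_left nhdsWithin_le_nhds)
  rw [sub_zero] at hlim
  refine ge_of_tendsto hlim ?_
  filter_upwards [Ioc_mem_nhdsGT ht] with a ha
  have hmgf : cgf X μ a ≤ mgf X μ a - 1 := log_le_sub_one_of_pos (mgf_pos (hexp a ha.1.le))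
  have := cgf_div_sub_cgf_div_le (fun s hs ↦ hexp s hs.le) hent ha.1 ha.2
  have := div_le_div_of_nonneg_right hmgf ha.1.le
  linarith

lemma measureReal_sub_integral_ge_le_of_cgf_le [IsFiniteMeasure μ] {σ r : ℝ}
    (hexp : ∀ t, 0 ≤ t → Integrable (fun ω ↦ exp (t * X ω)) μ)
    (hcgf : ∀ t, 0 ≤ t → cgf X μ t ≤ t * μ[X] + σ ^ 2 * t ^ 2 / 2) (hr : 0 ≤ r) :
    μ.real {ω | X ω - μ[X] ≥ r} ≤ exp (-r ^ 2 / (2 * σ ^ 2)) := by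
  set t := r / σ ^ 2
  have ht : 0 ≤ t := by positivity
  have hset : {ω | X ω - μ[X] ≥ r} = {ω | μ[X] + r ≤ X ω} := by
    ext ω
    exact (le_sub_iff_add_le' : r ≤ X ω - μ[X] ↔ _)
  -- for `σ = 0` both sides vanish, as `r / 0 = 0`
  have hexponent : -t * (μ[X] + r) + (t * μ[X] + σ ^ 2 * t ^ 2 / 2) = -r ^ 2 / (2 * σ ^ 2) := by
    rcases eq_or_ne σ 0 with rfl | hσ
    · simp [t]
    · simp only [t]
      field_simp
      ring
  rw [hset, ← hexponent]
  exact (measure_ge_le_exp_cgf _ ht (hexp t ht)).trans (exp_le_exp.2 (by linarith [hcgf t ht]))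

end ProbabilityTheory

open ProbabilityTheory

theorem herbst_argument_general {Ω : Type*} [MeasurableSpace Ω] (P : Measure Ω)
    [IsProbabilityMeasure P] (F : Ω → ℝ) (hFint : Integrable F P)
    (σ : ℝ)
    (hInt : ∀ l : ℝ, 0 ≤ l → Integrable (fun ω => Real.exp (l * F ω)) P)
    (hEnt : ∀ l : ℝ, 0 ≤ l →
      (∫ ω, Real.exp (l * F ω) * Real.log (Real.exp (l * F ω)) ∂P)
          - (∫ ω, Real.exp (l * F ω) ∂P) * Real.log (∫ ω, Real.exp (l * F ω) ∂P)
        ≤ (l ^ 2 * σ ^ 2 / 2) * ∫ ω, Real.exp (l * F ω) ∂P)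
    (r : ℝ) (hr : 0 ≤ r) :
    (P {ω | F ω - (∫ ω', F ω' ∂P) ≥ r}).toReal ≤ Real.exp (-r ^ 2 / (2 * σ ^ 2)) :=
  measureReal_sub_integral_ge_le_of_cgf_le hInt
    (fun _ ht ↦ cgf_le_of_entropy_le hFint hInt (fun t ht ↦ hEnt t ht.le) ht) hr

/-- Herbst argument: a uniform entropy bound along exponential moments implies Gaussian
concentration: `P(F − E[F] ≥ r) ≤ exp(−r²/(2σ²))`. -/
theorem herbst_argument {Ω : Type*} [MeasurableSpace Ω] (P : Measure Ω)
    [IsProbabilityMeasure P] (F : Ω → ℝ) (hFm : Measurable F) (hFint : Integrable F P)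
    (σ : ℝ) (hσ : 0 < σ)
    (hInt : ∀ l : ℝ, 0 ≤ l → Integrable (fun ω => Real.exp (l * F ω)) P)
    (hInt' : ∀ l : ℝ, 0 ≤ l → Integrable (fun ω => F ω * Real.exp (l * F ω)) P)
    (hEnt : ∀ l : ℝ, 0 ≤ l →
      (∫ ω, Real.exp (l * F ω) * Real.log (Real.exp (l * F ω)) ∂P)
          - (∫ ω, Real.exp (l * F ω) ∂P) * Real.log (∫ ω, Real.exp (l * F ω) ∂P)
        ≤ (l ^ 2 * σ ^ 2 / 2) * ∫ ω, Real.exp (l * F ω) ∂P)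
    (r : ℝ) (hr : 0 ≤ r) :
    (P {ω | F ω - (∫ ω', F ω' ∂P) ≥ r}).toReal ≤ Real.exp (-r ^ 2 / (2 * σ ^ 2)) :=
  herbst_argument_general P F hFint σ hInt hEnt r hr
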